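/- If λ > 1, 0 < κ < 1, and x is a real number satisfying x > (1/4)(-2λ + 1 + √((2λ+1)² + 16(1-κ)²)) or x < (1/4)(-2λ + 1 - √((2λ+1)² + 16(1-κ)²)), together with x + λ > 1 - κ, then 2(λ - (1-κ)²/(x+λ))·((1-κ)/(x+λ))² < 1. -/

import Mathlib

theorem stmt_7 (lam k x : ℝ) (hk : 0 < k) (hk1 : k < 1) (hlam : 1 < lam)
    (hx : x > (1/4) * (-2*lam + 1 + Real.sqrt ((2*lam + 1) ^ 2 + 16 * (1 - k) ^ 2)) ∨
          x < (1/4) * (-2*lam + 1 - Real.sqrt ((2*lam + 1) ^ 2 + 16 * (1 - k) ^ 2)))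
    (hout : x + lam > 1 - k) :
    2 * (lam - (1 - k) ^ 2 / (x + lam)) * ((1 - k) / (x + lam)) ^ 2 < 1 := by
  have hc0 : (0:ℝ) < 1 - k := by linarith
  have hc1 : 1 - k < 1 := by linarith
  have hs0 : (0:ℝ) < x + lam := lt_trans hc0 hout
  have hsq : (2*lam + 1) ≤ Real.sqrt ((2*lam + 1) ^ 2 + 16 * (1 - k) ^ 2) := by
    have h1 : (2*lam+1) = Real.sqrt ((2*lam+1)^2) := by
      rw [Real.sqrt_sq (by linarith)]
    rw [h1]
    apply Real.sqrt_le_sqrt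
    nlinarith [sq_nonneg (1 - k)]
  have hs : x + lam > lam + 1/2 := by
    rcases hx with h | h
    · nlinarith
    · exfalso; nlinarith
  have heq : 2 * (lam - (1 - k) ^ 2 / (x + lam)) * ((1 - k) / (x + lam)) ^ 2
      = (2 * (lam * (x + lam) - (1 - k) ^ 2) * (1 - k) ^ 2) / (x + lam) ^ 3 := by
    rw [div_pow, eq_div_iff (by positivity)]
    field_simp
  rw [heq, div_lt_one (by positivity)]
  have h1 : (1 - k) ^ 2 < 1 := by nlinarith
  have h2 : 2 * lam < (x + lam) ^ 2 := by nlinarith [sq_nonneg (lam - 1/2)]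
  have h3 : 0 < lam * (x + lam) := by positivity
  nlinarith [mul_pos hs0 (sub_pos.mpr h2), mul_nonneg h3.le (sub_pos.mpr h1).le,
    pow_pos hc0 4, sq_nonneg (1 - k)]
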